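/- Let k > 0 and a, b ∈ ℝ satisfy either ((|a|^{2/3} + |b|^{2/3})^{3/2} < k and |b| < |a|), or (2^{3/2}·|ab|^{1/2} < k and |b| ≥ |a|). Then there exists a constant K > 0 depending only on a, b, k such that for every n ∈ ℕ there exists a constant C_n ≥ 0 with the following property: for every continuous input u : [0,∞) → ℝ, every ξ = (ξ_1,…,ξ_n) ∈ ℝ^n, and every solution (x_1,…,x_n) of the linear string x_i'(t) = a·x_{i−1}(t) − k·x_i(t) + b·x_{i+1}(t) (with x_0 := u, x_{n+1} := 0) and x_i(0) = ξ_i, one has ‖x_i‖_{[0,t],2} ≤ K·‖u‖_{[0,t],2} + C_n·max_{j=1,…,n} |ξ_j| for all t ≥ 0 and all i = 1,…,n. -/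

import Mathlib

/-!
Choose a weight `r ∈ (0, 1]` with `δ := k - |a| / r - |b| * r > 0` (the hypotheses give `r = 1`,
resp. `r = √(|a| / |b|)`). Young's inequality in `d/dt xᵢ² = 2 xᵢ xᵢ'` and integration over
`[0, t]` give, for `Sᵢ = ∫₀ᵗ xᵢ²`, the three-term inequality
`(2k - |a|/r - |b| r) Sᵢ ≤ ξᵢ² + |a| r S_{i-1} + (|b|/r) S_{i+1}`.
For `wᵢ = Sᵢ / r^{2i}` the off-diagonal coefficients become `|a|/r` and `|b| r`, so a discrete
maximum principle bounds each `wᵢ` by `w₀ = ‖u‖²`, `w_{n+1} = 0` and `max ξᵢ² / (2 δ r^{2n})`;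
finally `Sᵢ ≤ wᵢ` because `r ≤ 1`.
-/

open Set intervalIntegral

noncomputable def l2Norm (y : ℝ → ℝ) (t : ℝ) : ℝ :=
  Real.sqrt (∫ s in (0:ℝ)..t, (y s) ^ 2)

lemma two_mul_mul_mul_le_abs_mul (c p q r : ℝ) (hr : 0 < r) :
    2 * c * p * q ≤ |c| * p ^ 2 / r + |c| * r * q ^ 2 := by
  rw [div_add' _ _ _ hr.ne', le_div_iff₀ hr]
  nlinarith [mul_nonneg (sub_nonneg.mpr (le_abs_self c)) (sq_nonneg (p + r * q)),
    mul_nonneg (neg_le_iff_add_nonneg.mp (neg_abs_le c)) (sq_nonneg (p - r * q))]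

lemma two_mul_mul_linear_stage_le {k α β r : ℝ} (hr : 0 < r) (x g h : ℝ) :
    2 * x * (α * g - k * x + β * h) ≤
      -(2 * k - |α| / r - |β| * r) * x ^ 2 + |α| * r * g ^ 2 + |β| / r * h ^ 2 := by
  have hα := two_mul_mul_mul_le_abs_mul α x g r hr
  have hβ := two_mul_mul_mul_le_abs_mul β h x r hr
  linear_combination hα + hβ

theorem energy_estimate_linear_stage {k α β r T : ℝ} (hr : 0 < r) (hT : 0 ≤ T) {x g h : ℝ → ℝ}
    (hg : ContinuousOn g (Icc 0 T)) (hh : ContinuousOn h (Icc 0 T))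
    (hx : ∀ t ∈ Icc 0 T, HasDerivAt x (α * g t - k * x t + β * h t) t) :
    (2 * k - |α| / r - |β| * r) * (∫ s in 0..T, x s ^ 2) ≤
      x 0 ^ 2 + |α| * r * (∫ s in 0..T, g s ^ 2) + |β| / r * ∫ s in 0..T, h s ^ 2 := by
  rw [← uIcc_of_le hT] at hg hh hx
  have hxc : ContinuousOn x (uIcc 0 T) := HasDerivAt.continuousOn hx
  have hsq {f : ℝ → ℝ} (hf : ContinuousOn f (uIcc 0 T)) (c : ℝ) :
      IntervalIntegrable (fun s => c * f s ^ 2) MeasureTheory.volume 0 T :=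
    (continuousOn_const.mul (hf.pow 2)).intervalIntegrable
  set γ := 2 * k - |α| / r - |β| * r
  have hint : IntervalIntegrable (fun s => 2 * x s * (α * g s - k * x s + β * h s))
      MeasureTheory.volume 0 T :=
    ((continuousOn_const.mul hxc).mul (((continuousOn_const.mul hg).sub
      (continuousOn_const.mul hxc)).add (continuousOn_const.mul hh))).intervalIntegrable
  have hftc : ∫ s in 0..T, 2 * x s * (α * g s - k * x s + β * h s) = x T ^ 2 - x 0 ^ 2 :=
    integral_eq_sub_of_hasDerivAt (f := fun s => x s ^ 2)
      (fun t ht => by simpa [mul_comm, mul_assoc] using (hx t ht).fun_pow 2) hint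
  have hmono : ∫ s in 0..T, 2 * x s * (α * g s - k * x s + β * h s) ≤
      ∫ s in 0..T, (-γ * x s ^ 2 + |α| * r * g s ^ 2 + |β| / r * h s ^ 2) :=
    integral_mono_on hT hint (((hsq hxc _).add (hsq hg _)).add (hsq hh _))
      fun s _ => two_mul_mul_linear_stage_le hr _ _ _
  rw [hftc, integral_add ((hsq hxc _).add (hsq hg _)) (hsq hh _),
    integral_add (hsq hxc _) (hsq hg _), integral_const_mul, integral_const_mul,
    integral_const_mul] at hmono
  linarith [sq_nonneg (x T)]

theorem le_max_of_discrete_maximum_principle {n : ℕ} {w : ℕ → ℝ} {μ p q c : ℝ} (hμ : 0 < μ)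
    (hp : 0 ≤ p) (hq : 0 ≤ q)
    (hw : ∀ j, 1 ≤ j → j ≤ n → (μ + p + q) * w j ≤ c + p * w (j - 1) + q * w (j + 1)) :
    ∀ j ≤ n + 1, w j ≤ max (max (w 0) (w (n + 1))) (c / μ) := by
  obtain ⟨m, hm, hmax⟩ := (Finset.range (n + 2)).exists_max_image w ⟨0, by simp⟩
  rw [Finset.mem_range] at hm
  have hle (j) (hj : j ≤ n + 1) : w j ≤ w m := hmax j (Finset.mem_range.mpr (by omega))
  suffices w m ≤ max (max (w 0) (w (n + 1))) (c / μ) from fun j hj => (hle j hj).trans this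
  rcases Nat.eq_zero_or_pos m with rfl | hm0
  · exact (le_max_left _ _).trans (le_max_left _ _)
  rcases (Nat.lt_succ_iff.mp hm).eq_or_lt with rfl | hmn
  · exact (le_max_right _ _).trans (le_max_left _ _)
  have h := hw m hm0 (by omega)
  have hprev := hle (m - 1) (by omega)
  have hnext := hle (m + 1) (by omega)
  have : μ * w m ≤ c := by nlinarith
  exact (le_div_iff₀' hμ |>.mpr this).trans (le_max_right _ _)

lemma exists_weight_of_two_mul_sqrt_lt {A B k : ℝ} (hA : 0 ≤ A) (hAB : A ≤ B)
    (h : 2 * √(A * B) < k) : ∃ r, 0 < r ∧ r ≤ 1 ∧ A / r + B * r < k := by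
  rcases hA.eq_or_lt with rfl | hApos
  · have hk : 0 < k := by simpa using h
    refine ⟨min 1 (k / (B + 1)), by positivity, min_le_left _ _, ?_⟩
    have hB : 0 ≤ B := hAB
    calc 0 / min 1 (k / (B + 1)) + B * min 1 (k / (B + 1)) ≤ B * (k / (B + 1)) := by
          rw [zero_div, zero_add]; exact mul_le_mul_of_nonneg_left (min_le_right _ _) hB
      _ < k := by rw [mul_div_assoc', div_lt_iff₀ (by positivity)]; nlinarith
  · have hB : 0 < B := hApos.trans_le hAB
    refine ⟨√A / √B, by positivity, (div_le_one (by positivity)).mpr (Real.sqrt_le_sqrt hAB), ?_⟩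
    have : A / (√A / √B) + B * (√A / √B) = 2 * √(A * B) := by
      rw [div_div_eq_mul_div, mul_div_right_comm, Real.div_sqrt, mul_div_left_comm,
        Real.div_sqrt, Real.sqrt_mul hA]
      ring
    rwa [this]

lemma exists_weight {a b k : ℝ}
    (hcond : ((|a| ^ ((2:ℝ)/3) + |b| ^ ((2:ℝ)/3)) ^ ((3:ℝ)/2) < k ∧ |b| < |a|) ∨
      ((2:ℝ) ^ ((3:ℝ)/2) * |a * b| ^ ((1:ℝ)/2) < k ∧ |a| ≤ |b|)) :
    ∃ r, 0 < r ∧ r ≤ 1 ∧ |a| / r + |b| * r < k := by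
  rcases hcond with ⟨h, -⟩ | ⟨h, hab⟩
  · refine ⟨1, one_pos, le_rfl, ?_⟩
    have hpow (y : ℝ) : (|y| ^ ((2:ℝ)/3)) ^ ((3:ℝ)/2) = |y| := by
      rw [← Real.rpow_mul (abs_nonneg y)]; norm_num
    have := Real.add_rpow_le_rpow_add (p := (3:ℝ)/2) (Real.rpow_nonneg (abs_nonneg a) ((2:ℝ)/3))
      (Real.rpow_nonneg (abs_nonneg b) ((2:ℝ)/3)) (by norm_num)
    rw [hpow, hpow] at this
    rw [div_one, mul_one]
    exact this.trans_lt h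
  · refine exists_weight_of_two_mul_sqrt_lt (abs_nonneg a) hab (lt_of_le_of_lt ?_ h)
    rw [Real.sqrt_eq_rpow, ← abs_mul]
    gcongr
    calc (2:ℝ) = 2 ^ (1:ℝ) := (Real.rpow_one 2).symm
      _ ≤ 2 ^ ((3:ℝ)/2) := Real.rpow_le_rpow_of_exponent_le one_le_two (by norm_num)

lemma div_pow_three_term_le {γ A B M r S₀ S₁ S₂ : ℝ} (hr : 0 < r) (m : ℕ)
    (h : γ * S₁ ≤ M + A * r * S₀ + B / r * S₂) :
    γ * (S₁ / r ^ (2 * (m + 1))) ≤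
      M / r ^ (2 * (m + 1)) + A / r * (S₀ / r ^ (2 * m)) + B * r * (S₂ / r ^ (2 * (m + 2))) := by
  have hrhs : M / r ^ (2 * (m + 1)) + A / r * (S₀ / r ^ (2 * m)) + B * r * (S₂ / r ^ (2 * (m + 2)))
      = (M + A * r * S₀ + B / r * S₂) / r ^ (2 * (m + 1)) := by
    field_simp
    ring
  rw [hrhs, mul_div_assoc']
  exact div_le_div_of_nonneg_right h (by positivity)

lemma sqrt_le_sqrt_add_sqrt_mul {p q c m : ℝ} (hp : 0 ≤ p) (hc : 0 ≤ c) (hm : 0 ≤ m)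
    (h : q ≤ p + c * m ^ 2) : √q ≤ √p + √c * m := by
  rw [Real.sqrt_le_left (by positivity)]
  nlinarith [Real.sq_sqrt hp, Real.sq_sqrt hc, mul_nonneg (mul_nonneg (Real.sqrt_nonneg p)
    (Real.sqrt_nonneg c)) hm]

theorem integral_sq_le_of_linear_string {k a b r T M : ℝ} (hr0 : 0 < r) (hr1 : r ≤ 1)
    (hkr : |a| / r + |b| * r < k) (hT : 0 ≤ T) {n : ℕ} {x : ℕ → ℝ → ℝ}
    (hx0 : ContinuousOn (x 0) (Icc 0 T)) (hxn : ∀ t, x (n + 1) t = 0)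
    (hsol : ∀ i, 1 ≤ i → i ≤ n → ∀ t ∈ Icc 0 T,
      HasDerivAt (x i) (a * x (i - 1) t - k * x i t + b * x (i + 1) t) t)
    (hM : ∀ i, 1 ≤ i → i ≤ n → x i 0 ^ 2 ≤ M) (i : ℕ) (hi1 : 1 ≤ i) (hin : i ≤ n) :
    ∫ s in 0..T, x i s ^ 2 ≤
      (∫ s in 0..T, x 0 s ^ 2) + M / r ^ (2 * n) / (2 * (k - |a| / r - |b| * r)) := by
  have hcont (j : ℕ) (hj : j ≤ n + 1) : ContinuousOn (x j) (Icc 0 T) := by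
    rcases Nat.eq_zero_or_pos j with rfl | hj0
    · exact hx0
    rcases hj.eq_or_lt with rfl | hjn
    · simpa [funext hxn] using continuousOn_const
    · exact HasDerivAt.continuousOn (hsol j hj0 (by omega))
  set S : ℕ → ℝ := fun j => ∫ s in 0..T, x j s ^ 2
  set w : ℕ → ℝ := fun j => S j / r ^ (2 * j)
  have hS (j : ℕ) : 0 ≤ S j := intervalIntegral.integral_nonneg hT fun s _ => sq_nonneg _
  have hM0 : 0 ≤ M := (sq_nonneg _).trans (hM i hi1 hin)
  have hδ : 0 < 2 * (k - |a| / r - |b| * r) := by linarith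
  have hstep (j : ℕ) (hj1 : 1 ≤ j) (hjn : j ≤ n) :
      (2 * (k - |a| / r - |b| * r) + |a| / r + |b| * r) * w j ≤
        M / r ^ (2 * n) + |a| / r * w (j - 1) + |b| * r * w (j + 1) := by
    obtain ⟨m, rfl⟩ := Nat.exists_eq_add_of_le' hj1
    have henergy := energy_estimate_linear_stage hr0 hT (hcont m (by omega))
      (hcont (m + 2) (by omega)) (hsol (m + 1) hj1 hjn)
    have hrescaled := div_pow_three_term_le (γ := 2 * k - |a| / r - |b| * r) hr0 m
      (henergy.trans (by linarith [hM (m + 1) hj1 hjn]) :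
        _ ≤ M + |a| * r * S m + |b| / r * S (m + 2))
    have hMr : M / r ^ (2 * (m + 1)) ≤ M / r ^ (2 * n) :=
      div_le_div_of_nonneg_left hM0 (by positivity)
        (pow_le_pow_of_le_one hr0.le hr1 (by omega))
    simp only [w, Nat.add_sub_cancel]
    linarith
  have hmax := le_max_of_discrete_maximum_principle hδ (by positivity) (by positivity) hstep i
    (by omega)
  have hw0 : w 0 = S 0 := by simp [w]
  have hwn : w (n + 1) = 0 := by simp [w, S, hxn]
  calc S i ≤ w i := le_div_self (hS i) (by positivity) (pow_le_one₀ hr0.le hr1)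
    _ ≤ S 0 + M / r ^ (2 * n) / (2 * (k - |a| / r - |b| * r)) := by
      rw [hw0, hwn] at hmax
      refine hmax.trans (max_le (max_le ?_ ?_) ?_) <;>
        linarith [hS 0, show 0 ≤ M / r ^ (2 * n) / (2 * (k - |a| / r - |b| * r)) by positivity]

theorem linear_string_one_sided (k a b : ℝ)
    (hcond : ((|a| ^ ((2:ℝ)/3) + |b| ^ ((2:ℝ)/3)) ^ ((3:ℝ)/2) < k ∧ |b| < |a|) ∨
      ((2:ℝ) ^ ((3:ℝ)/2) * |a * b| ^ ((1:ℝ)/2) < k ∧ |a| ≤ |b|)) :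
    ∃ K : ℝ, 0 < K ∧ ∀ (n : ℕ) (hn : 1 ≤ n), ∃ C : ℝ, 0 ≤ C ∧
      ∀ u : ℝ → ℝ, ContinuousOn u (Set.Ici 0) →
      ∀ ξ : ℕ → ℝ, ∀ x : ℕ → ℝ → ℝ,
        (∀ t, x 0 t = u t) → (∀ t, x (n + 1) t = 0) →
        (∀ i, 1 ≤ i → i ≤ n → x i 0 = ξ i ∧
          ∀ t ≥ (0:ℝ), HasDerivAt (x i)
            (a * x (i - 1) t - k * x i t + b * x (i + 1) t) t) →
        ∀ i, 1 ≤ i → i ≤ n → ∀ t ≥ (0:ℝ),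
          l2Norm (x i) t ≤
            K * l2Norm u t +
            C * ((Finset.Icc 1 n).sup' (Finset.nonempty_Icc.mpr hn) fun j => |ξ j|) := by
  obtain ⟨r, hr0, hr1, hkr⟩ := exists_weight hcond
  refine ⟨1, one_pos, fun n hn => ⟨√(1 / r ^ (2 * n) / (2 * (k - |a| / r - |b| * r))),
    Real.sqrt_nonneg _, fun u hu ξ x hx0 hxn hsol i hi1 hin t ht => ?_⟩⟩
  set Ξ := (Finset.Icc 1 n).sup' (Finset.nonempty_Icc.mpr hn) fun j => |ξ j|
  have hξ (j : ℕ) (hj1 : 1 ≤ j) (hjn : j ≤ n) : x j 0 ^ 2 ≤ Ξ ^ 2 := by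
    rw [(hsol j hj1 hjn).1, ← sq_abs]
    exact pow_le_pow_left₀ (abs_nonneg _)
      (Finset.le_sup' (fun j => |ξ j|) (Finset.mem_Icc.mpr ⟨hj1, hjn⟩)) 2
  have hu0 : x 0 = u := funext hx0
  have hbound := integral_sq_le_of_linear_string hr0 hr1 hkr ht
    (hu0 ▸ hu.mono Icc_subset_Ici_self) hxn (fun j hj1 hjn s hs => (hsol j hj1 hjn).2 s hs.1)
    hξ i hi1 hin
  have hΞ : 0 ≤ Ξ := (abs_nonneg _).trans
    (Finset.le_sup' (fun j => |ξ j|) (Finset.mem_Icc.mpr ⟨le_rfl, hn⟩))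
  rw [hu0] at hbound
  rw [one_mul]
  exact sqrt_le_sqrt_add_sqrt_mul (intervalIntegral.integral_nonneg ht fun s _ => sq_nonneg _)
    (div_nonneg (by positivity) (by linarith)) hΞ (hbound.trans_eq (by ring))
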